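/- arXiv:1008.2924 — 3 statements merged into one kernel-verified Lean document; each statement's English description precedes it below -/
import Mathlib

section
/- In S = K[x_1,x_2,x_3,x_4], for I = (x_1,x_2) ∩ (x_3,x_4), the direct sum x_1x_3 K[x_1,x_3,x_4] ⊕ x_1x_4 K[x_1,x_2,x_4] ⊕ x_2x_3 K[x_1,x_2,x_3] ⊕ x_2x_4 K[x_2,x_3,x_4] ⊕ x_1x_2x_3x_4 S is a Stanley decomposition of I (i.e., the sum is direct as K-vector spaces and equals I), hence sdepth_S(I) ≥ 3. -/
open MvPolynomial

/-- The depth of a module `M` with respect to an ideal `I`: the supremum of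
lengths of `M`-regular sequences with entries in `I`. -/
noncomputable def moduleDepth (R : Type*) [CommRing R] (I : Ideal R)
    (M : Type*) [AddCommGroup M] [Module R M] : ℕ :=
  sSup {k | ∃ rs : List R, rs.length = k ∧ (∀ r ∈ rs, r ∈ I) ∧
    RingTheory.Sequence.IsRegular M rs}

/-- The Stanley space `u·K[Z]`: the `K`-span of all monomials `u·v` with
`v` a monomial in the variables of `Z`. -/
noncomputable def stanleySpace {n : ℕ} (K : Type*) [Field K] (d : Fin n →₀ ℕ)
    (Z : Finset (Fin n)) : Submodule K (MvPolynomial (Fin n) K) :=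
  Submodule.span K {f | ∃ e : Fin n →₀ ℕ, (∀ i, e i ≠ 0 → i ∈ Z) ∧
    f = monomial (d + e) (1 : K)}

/-- A Stanley decomposition of a monomial ideal `I`: a finite family of Stanley
spaces `uᵢ·K[Zᵢ]`, with each `uᵢ ∈ I`, which are independent and whose (direct)
sum is `I` as a `K`-vector space. -/
structure StanleyDecomp {n : ℕ} (K : Type*) [Field K]
    (I : Ideal (MvPolynomial (Fin n) K)) where
  m : ℕ
  u : Fin m → (Fin n →₀ ℕ)
  Z : Fin m → Finset (Fin n)
  mem : ∀ i, monomial (u i) (1 : K) ∈ I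
  indep : iSupIndep fun i => stanleySpace K (u i) (Z i)
  total : (⨆ i, stanleySpace K (u i) (Z i)) = Submodule.restrictScalars K I

/-- The Stanley depth of a monomial ideal: the largest `k` such that `I` admits a
Stanley decomposition all of whose Stanley spaces use at least `k` variables. -/
noncomputable def sdepth {n : ℕ} {K : Type*} [Field K]
    (I : Ideal (MvPolynomial (Fin n) K)) : ℕ :=
  sSup {k | ∃ D : StanleyDecomp K I, ∀ i, k ≤ (D.Z i).card}

/-- `I` is a monomial ideal if it is generated by monomials. -/
def IsMonomialIdeal {n : ℕ} {K : Type*} [Field K]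
    (I : Ideal (MvPolynomial (Fin n) K)) : Prop :=
  ∃ G : Set (Fin n →₀ ℕ), I = Ideal.span ((fun d => monomial d (1 : K)) '' G)

/-- The monomial prime ideal generated by the variables in `A`. -/
noncomputable def varIdeal {n : ℕ} (K : Type*) [Field K] (A : Finset (Fin n)) :
    Ideal (MvPolynomial (Fin n) K) :=
  Ideal.span ((fun i => (X i : MvPolynomial (Fin n) K)) '' ↑A)

/-- The graded maximal ideal `(x_1, …, x_n)`. -/
noncomputable def maxIdeal (n : ℕ) (K : Type*) [Field K] :
    Ideal (MvPolynomial (Fin n) K) :=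
  varIdeal K Finset.univ

/-!
A Stanley space `u·K[Z]` is the span of the monomials whose exponents lie in the cone
`{a | u ≤ a, aᵢ = uᵢ for i ∉ Z}`, and `(x₁,x₂) ∩ (x₃,x₄)` is, as a `K`-space, the span of the
monomials whose exponents have a nonzero entry among the first two and among the last two
coordinates. Since the monomials form a basis, independence of the five Stanley spaces and the
equality of their sum with the ideal reduce to the five cones being pairwise disjoint and covering
exactly those exponents, a case check on four coordinates. For `sdepth`, every Stanley
decomposition of a nonzero ideal has a summand, which uses at most `n` variables, so the set
defining `sdepth` is bounded above and contains `3`.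
-/

open Function

namespace MvPolynomial

variable {σ R : Type*} [CommSemiring R]

theorem iSup_restrictSupport {ι : Sort*} (T : ι → Set (σ →₀ ℕ)) :
    ⨆ i, restrictSupport R (T i) = restrictSupport R (⋃ i, T i) := by
  simp only [restrictSupport_eq_span, Set.image_iUnion, Submodule.span_iUnion]

theorem restrictSupport_inter (s t : Set (σ →₀ ℕ)) :
    restrictSupport R (s ∩ t) = restrictSupport R s ⊓ restrictSupport R t := by
  ext p
  simp only [Submodule.mem_inf, mem_restrictSupport_iff, Set.subset_inter_iff]

theorem disjoint_restrictSupport {s t : Set (σ →₀ ℕ)} (h : Disjoint s t) :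
    Disjoint (restrictSupport R s) (restrictSupport R t) := by
  rw [disjoint_iff, ← restrictSupport_inter, h.inter_eq, eq_bot_iff]
  intro p hp
  rwa [mem_restrictSupport_iff, Set.subset_empty_iff, Finset.coe_eq_empty, support_eq_empty] at hp

theorem iSupIndep_restrictSupport {ι : Type*} {T : ι → Set (σ →₀ ℕ)}
    (hT : Pairwise (Disjoint on T)) : iSupIndep fun i => restrictSupport R (T i) := by
  intro i
  simp only [iSup_restrictSupport]
  exact disjoint_restrictSupport (iSupIndep_iff_pairwiseDisjoint.mpr hT i)

theorem restrictScalars_span_X_image (s : Set σ) :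
    (Ideal.span (X '' s : Set (MvPolynomial σ R))).restrictScalars R =
      restrictSupport R {a | ∃ i ∈ s, a i ≠ 0} := by
  ext p
  rw [Submodule.restrictScalars_mem, mem_ideal_span_X_image, mem_restrictSupport_iff]
  rfl

end MvPolynomial

open MvPolynomial

def stanleyExponents {σ : Type*} (d : σ →₀ ℕ) (Z : Finset σ) : Set (σ →₀ ℕ) :=
  {a | d ≤ a ∧ ∀ i ∉ Z, a i = d i}

theorem mem_stanleyExponents_iff {σ : Type*} [DecidableEq σ] {d a : σ →₀ ℕ} {Z : Finset σ} :
    a ∈ stanleyExponents d Z ↔ ∀ i, if i ∈ Z then d i ≤ a i else a i = d i := by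
  simp only [stanleyExponents, Set.mem_ofPred_eq, Finsupp.le_def]
  refine ⟨fun ⟨hle, hout⟩ i => ?_, fun h => ⟨fun i => ?_, fun i hi => ?_⟩⟩
  · split_ifs with hi
    exacts [hle i, hout i hi]
  · have := h i
    split_ifs at this <;> omega
  · simpa [hi] using h i

section

variable {K : Type*} [Field K]

section

variable {n : ℕ}

theorem stanleySpace_eq_restrictSupport (d : Fin n →₀ ℕ) (Z : Finset (Fin n)) :
    stanleySpace K d Z = restrictSupport K (stanleyExponents d Z) := by
  rw [stanleySpace, restrictSupport_eq_span]
  congr 1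
  ext f
  constructor
  · rintro ⟨e, he, rfl⟩
    refine ⟨d + e, ⟨le_self_add, fun i hi => ?_⟩, rfl⟩
    simpa using not_imp_comm.mp (he i) hi
  · rintro ⟨a, ⟨hle, hout⟩, rfl⟩
    refine ⟨a - d, fun i hi => ?_, by rw [add_tsub_cancel_of_le hle]⟩
    by_contra hiZ
    exact hi (by simp [hout i hiZ])

theorem restrictScalars_varIdeal (A : Finset (Fin n)) :
    (varIdeal K A).restrictScalars K = restrictSupport K {a | ∃ i ∈ A, a i ≠ 0} := by
  rw [varIdeal, restrictScalars_span_X_image]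
  simp only [Finset.mem_coe]

variable {m : ℕ} {u : Fin m → Fin n →₀ ℕ} {Z : Fin m → Finset (Fin n)}

theorem iSupIndep_stanleySpace (h : Pairwise (Disjoint on fun i => stanleyExponents (u i) (Z i))) :
    iSupIndep fun i => stanleySpace K (u i) (Z i) := by
  simpa only [stanleySpace_eq_restrictSupport] using iSupIndep_restrictSupport h

theorem iSup_stanleySpace :
    ⨆ i, stanleySpace K (u i) (Z i) = restrictSupport K (⋃ i, stanleyExponents (u i) (Z i)) := by
  simp only [stanleySpace_eq_restrictSupport, iSup_restrictSupport]

def StanleyDecomp.ofExponents {I : Ideal (MvPolynomial (Fin n) K)} (u : Fin m → Fin n →₀ ℕ)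
    (Z : Fin m → Finset (Fin n))
    (hdisj : Pairwise (Disjoint on fun i => stanleyExponents (u i) (Z i)))
    (hI : I.restrictScalars K = restrictSupport K (⋃ i, stanleyExponents (u i) (Z i))) :
    StanleyDecomp K I where
  m := m
  u := u
  Z := Z
  mem i := by
    change _ ∈ I.restrictScalars K
    rw [hI, monomial_mem_restrictSupport]
    exact .inl (Set.mem_iUnion_of_mem i ⟨le_rfl, fun _ _ => rfl⟩)
  indep := iSupIndep_stanleySpace hdisj
  total := iSup_stanleySpace.trans hI.symm

theorem StanleyDecomp.le_sdepth {I : Ideal (MvPolynomial (Fin n) K)} (D : StanleyDecomp K I)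
    (hm : 0 < D.m) {k : ℕ} (hk : ∀ i, k ≤ (D.Z i).card) : k ≤ sdepth I := by
  have hI : I.restrictScalars K ≠ ⊥ := fun h => by
    have := D.mem ⟨0, hm⟩
    rw [← Submodule.restrictScalars_mem K, h, Submodule.mem_bot, monomial_eq_zero] at this
    exact one_ne_zero this
  refine le_csSup ⟨n, fun k ⟨D', hD'⟩ => ?_⟩ ⟨D, hk⟩
  obtain ⟨i⟩ : Nonempty (Fin D'.m) := by
    by_contra hempty
    rw [not_nonempty_iff] at hempty
    exact hI (D'.total.symm.trans (iSup_of_empty _))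
  exact (hD' i).trans ((D'.Z i).card_le_univ.trans_eq (Fintype.card_fin n))

end

noncomputable def exampleGens : Fin 5 → (Fin 4 →₀ ℕ) :=
  ![.single 0 1 + .single 2 1, .single 0 1 + .single 3 1, .single 1 1 + .single 2 1,
    .single 1 1 + .single 3 1, .single 0 1 + .single 1 1 + .single 2 1 + .single 3 1]

def exampleVars : Fin 5 → Finset (Fin 4) :=
  ![{0, 2, 3}, {0, 1, 3}, {0, 1, 2}, {1, 2, 3}, .univ]

theorem three_le_card_exampleVars : ∀ k, 3 ≤ (exampleVars k).card := by
  decide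

theorem mem_exampleExponents_iff (k : Fin 5) (a : Fin 4 →₀ ℕ) :
    a ∈ stanleyExponents (exampleGens k) (exampleVars k) ↔
      ![1 ≤ a 0 ∧ a 1 = 0 ∧ 1 ≤ a 2, 1 ≤ a 0 ∧ a 2 = 0 ∧ 1 ≤ a 3,
        1 ≤ a 1 ∧ 1 ≤ a 2 ∧ a 3 = 0, a 0 = 0 ∧ 1 ≤ a 1 ∧ 1 ≤ a 3,
        1 ≤ a 0 ∧ 1 ≤ a 1 ∧ 1 ≤ a 2 ∧ 1 ≤ a 3] k := by
  rw [mem_stanleyExponents_iff]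
  fin_cases k <;> simp [Fin.forall_fin_succ, exampleGens, exampleVars, Finsupp.single_apply]

theorem pairwise_disjoint_exampleExponents :
    Pairwise (Disjoint on fun k => stanleyExponents (exampleGens k) (exampleVars k)) := by
  intro k l hkl
  rw [onFun, Set.disjoint_left]
  intro a hk hl
  rw [mem_exampleExponents_iff] at hk hl
  fin_cases k <;> fin_cases l <;> simp_all

theorem iUnion_exampleExponents :
    ⋃ k, stanleyExponents (exampleGens k) (exampleVars k) =
      {a | ∃ i ∈ ({0, 1} : Finset (Fin 4)), a i ≠ 0} ∩
        {a | ∃ i ∈ ({2, 3} : Finset (Fin 4)), a i ≠ 0} := by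
  ext a
  simp only [Set.mem_iUnion, Fin.exists_fin_succ, Fin.exists_fin_zero, mem_exampleExponents_iff,
    Fin.succ_zero_eq_one, Fin.succ_one_eq_two, Fin.reduceSucc, Matrix.cons_val, or_false,
    Set.mem_inter_iff, Set.mem_ofPred_eq, Finset.exists_mem_insert, Finset.mem_singleton,
    exists_eq_left]
  omega

theorem restrictScalars_inf_varIdeal_eq_restrictSupport_exampleExponents :
    (varIdeal K {0, 1} ⊓ varIdeal K {2, 3} : Ideal (MvPolynomial (Fin 4) K)).restrictScalars K =
      restrictSupport K (⋃ k, stanleyExponents (exampleGens k) (exampleVars k)) := by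
  rw [Submodule.restrictScalars_inf, restrictScalars_varIdeal, restrictScalars_varIdeal,
    iUnion_exampleExponents, restrictSupport_inter]

variable (K) in
noncomputable def exampleDecomp :
    StanleyDecomp K (varIdeal K {0, 1} ⊓ varIdeal K {2, 3} : Ideal (MvPolynomial (Fin 4) K)) :=
  .ofExponents exampleGens exampleVars pairwise_disjoint_exampleExponents
    restrictScalars_inf_varIdeal_eq_restrictSupport_exampleExponents

end

/-- an explicit Stanley decomposition of `(x₁,x₂) ∩ (x₃,x₄)` in
`K[x₁,x₂,x₃,x₄]` into five Stanley spaces, whence `sdepth ≥ 3`. -/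
theorem stanley_decomp_example_four_vars {K : Type*} [Field K] :
    letI s : Fin 4 → (Fin 4 →₀ ℕ) := fun i => Finsupp.single i 1
    letI I : Ideal (MvPolynomial (Fin 4) K) :=
      varIdeal K {0, 1} ⊓ varIdeal K {2, 3}
    letI f : Fin 5 → Submodule K (MvPolynomial (Fin 4) K) :=
      ![stanleySpace K (s 0 + s 2) {0, 2, 3},
        stanleySpace K (s 0 + s 3) {0, 1, 3},
        stanleySpace K (s 1 + s 2) {0, 1, 2},
        stanleySpace K (s 1 + s 3) {1, 2, 3},
        stanleySpace K (s 0 + s 1 + s 2 + s 3) Finset.univ]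
    iSupIndep f ∧ (⨆ i, f i) = Submodule.restrictScalars K I ∧ sdepth I ≥ 3 := by
  have hindep : iSupIndep fun k => stanleySpace K (exampleGens k) (exampleVars k) :=
    (exampleDecomp K).indep
  have htotal : ⨆ k, stanleySpace K (exampleGens k) (exampleVars k) =
      (varIdeal K {0, 1} ⊓ varIdeal K {2, 3}).restrictScalars K :=
    (exampleDecomp K).total
  refine ⟨?_, ?_, (exampleDecomp K).le_sdepth (Nat.succ_pos 4) three_le_card_exampleVars⟩
  · convert hindep using 1
    funext k
    fin_cases k <;> rfl
  · convert htotal using 3 with k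
    fin_cases k <;> rfl
end

section
/- Let P_1, P_2, P_3 be monomial primes of S = K[x_1,...,x_n], pairwise incomparable, with P_1 + P_2 + P_3 = (x_1,...,x_n), P_1 = (x_1,...,x_r). Then A = ⌈(3n − ht(P_1+P_2) − ht(P_2+P_3) − ht(P_2))/2⌉ + ⌈(ht(P_1+P_2) − ht(P_1))/2⌉, where A = ⌈a_{32}/2⌉ + ⌈(ht(P_2) − b_2)/2⌉ + n − a_{32} − ht(P_2) with a_{32} = #{i ≤ r : x_i ∈ P_3 \ P_2} and b_2 = #{i ≤ r : x_i ∈ P_2}. Analogous formulas hold for B and C; in particular C = ⌈(n − ht(P_2+P_3))/2⌉ + ⌈(n − ht(P_1+P_3))/2⌉ + ⌈(n − ht(P_1+P_2))/2⌉. -/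
open MvPolynomial

/-!
Monomial primes generated by variable sets compare and add like the sets themselves, so
`P₁ + P₂ + P₃ = 𝔪` says `A₁ ∪ A₂ ∪ A₃` contains every variable, and `P₂ ⊄ P₁` forces `r < n`,
i.e. `ht P₁ = r`. Every argument of a ceiling on either side is then the size of a region of the
Venn diagram of `A₁, A₂, A₃`: for instance `n - ht(P₂ + P₃)` and `r - b₁` both count the
variables lying in `A₁` only, while `ht(P₁ + P₂) - ht P₁` and `ht P₂ - b₂` both count `A₂ \ A₁`.
-/

namespace MvPolynomial

variable {n : ℕ} {K : Type*} [Field K]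

lemma X_mem_varIdeal_iff {A : Finset (Fin n)} {i : Fin n} :
    (X i : MvPolynomial (Fin n) K) ∈ varIdeal K A ↔ i ∈ A := by
  simp [varIdeal, mem_ideal_span_X_image, support_X, Finsupp.single_apply]

lemma varIdeal_le_varIdeal_iff {A B : Finset (Fin n)} :
    varIdeal K A ≤ varIdeal K B ↔ A ⊆ B := by
  refine ⟨fun h i hi ↦ X_mem_varIdeal_iff.1 (h (X_mem_varIdeal_iff.2 hi)), fun h ↦ ?_⟩
  rw [varIdeal, Ideal.span_le]
  rintro _ ⟨i, hi, rfl⟩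
  exact X_mem_varIdeal_iff.2 (h hi)

lemma varIdeal_sup_varIdeal (A B : Finset (Fin n)) :
    varIdeal K A ⊔ varIdeal K B = varIdeal K (A ∪ B) := by
  rw [varIdeal, varIdeal, varIdeal, ← Ideal.span_union, ← Set.image_union, Finset.coe_union]

lemma varIdeal_eq_maxIdeal_iff {A : Finset (Fin n)} :
    varIdeal K A = maxIdeal n K ↔ A = Finset.univ := by
  rw [maxIdeal, le_antisymm_iff, varIdeal_le_varIdeal_iff, varIdeal_le_varIdeal_iff,
    ← Finset.Subset.antisymm_iff]

end MvPolynomial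

namespace Finset

variable {α : Type*} [Fintype α] [DecidableEq α] {A B C : Finset α}

lemma card_sdiff_add_card_of_union_eq_univ (h : A ∪ B = univ) :
    #(A \ B) + #B = Fintype.card α := by
  rw [card_sdiff_add_card, h, card_univ]

lemma card_sub_card_inter_sub_card_inter_sdiff (S T U : Finset α) :
    #S - #(T ∩ S) - #((S ∩ U) \ T) = #(S \ (T ∪ U)) := by
  have hT := card_sdiff_add_card_inter S T
  have hU := card_sdiff_add_card_inter (S \ T) U
  rw [sdiff_sdiff_left, sup_eq_union, sdiff_inter_right_comm] at hU
  rw [inter_comm T]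
  omega

lemma card_formula_A_of_union_eq_univ (h : A ∪ B ∪ C = univ) :
    (#(A ∩ (C \ B)) + 1) / 2 + (#B - #(A ∩ B) + 1) / 2 + Fintype.card α - #(A ∩ (C \ B)) - #B =
      (3 * Fintype.card α - #(A ∪ B) - #(B ∪ C) - #B + 1) / 2 + (#(A ∪ B) - #A + 1) / 2 := by
  have hAB := card_union_add_card_inter A B
  have hsplit := card_sdiff_add_card A B
  have hA := card_sdiff_add_card_of_union_eq_univ (A := A) (B := B ∪ C) (by rwa [← union_assoc])
  have hC := card_sdiff_add_card_of_union_eq_univ (A := C) (B := A ∪ B) (by rwa [union_comm])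
  have hAC := card_sdiff_add_card_inter (A \ B) C
  rw [sdiff_sdiff_left, sup_eq_union, sdiff_inter_right_comm, inter_sdiff_assoc] at hAC
  omega

lemma card_formula_C_of_union_eq_univ (h : A ∪ B ∪ C = univ) :
    (#A - #(A ∩ (B ∪ C)) + 1) / 2 + (#B - #(A ∩ B) - #((B ∩ C) \ A) + 1) / 2 +
        (#C - #(A ∩ C) - #((B ∩ C) \ A) + 1) / 2 =
      (Fintype.card α - #(B ∪ C) + 1) / 2 + (Fintype.card α - #(A ∪ C) + 1) / 2 +
        (Fintype.card α - #(A ∪ B) + 1) / 2 := by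
  have hA := card_sdiff_add_card_of_union_eq_univ (A := A) (B := B ∪ C) (by rwa [← union_assoc])
  have hB := card_sdiff_add_card_of_union_eq_univ (A := B) (B := A ∪ C)
    (by rwa [union_left_comm, ← union_assoc])
  have hC := card_sdiff_add_card_of_union_eq_univ (A := C) (B := A ∪ B) (by rwa [union_comm])
  rw [← card_sub_card_inter_sub_card_inter_sdiff] at hB hC
  rw [inter_comm C] at hC
  have hA' := card_sdiff_add_card_inter A (B ∪ C)
  omega

end Finset

/-- the quantities `A`, `B`, `C` expressed purely in terms of the
heights of the primes `P_i` and of their pairwise sums (heights being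
cardinalities of the generating variable sets, `P₁ = (x₁,…,x_r)`, and
`⌈x/2⌉ = (x+1)/2` in natural-number arithmetic). -/
theorem ABC_height_formulas {K : Type*} [Field K] (n r : ℕ)
    (A2 A3 : Finset (Fin n)) :
    letI A1 : Finset (Fin n) := Finset.univ.filter fun i => (i : ℕ) < r
    letI P1 : Ideal (MvPolynomial (Fin n) K) := varIdeal K A1
    letI P2 : Ideal (MvPolynomial (Fin n) K) := varIdeal K A2
    letI P3 : Ideal (MvPolynomial (Fin n) K) := varIdeal K A3
    letI b1 : ℕ := (A1 ∩ (A2 ∪ A3)).card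
    letI b2 : ℕ := (A1 ∩ A2).card
    letI b3 : ℕ := (A1 ∩ A3).card
    letI a23 : ℕ := (A1 ∩ (A2 \ A3)).card
    letI a32 : ℕ := (A1 ∩ (A3 \ A2)).card
    letI c : ℕ := ((A2 ∩ A3) \ A1).card
    P1 ≠ ⊥ → P2 ≠ ⊥ → P3 ≠ ⊥ →
    ¬P1 ≤ P2 → ¬P2 ≤ P1 → ¬P1 ≤ P3 → ¬P3 ≤ P1 → ¬P2 ≤ P3 → ¬P3 ≤ P2 →
    P1 ⊔ P2 ⊔ P3 = maxIdeal n K →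
    ((a32 + 1) / 2 + (A2.card - b2 + 1) / 2 + n - a32 - A2.card =
        (3 * n - (A1 ∪ A2).card - (A2 ∪ A3).card - A2.card + 1) / 2 +
          ((A1 ∪ A2).card - A1.card + 1) / 2) ∧
      ((a23 + 1) / 2 + (A3.card - b3 + 1) / 2 + n - a23 - A3.card =
        (3 * n - (A1 ∪ A3).card - (A2 ∪ A3).card - A3.card + 1) / 2 +
          ((A1 ∪ A3).card - A1.card + 1) / 2) ∧
      ((r - b1 + 1) / 2 + (A2.card - b2 - c + 1) / 2 + (A3.card - b3 - c + 1) / 2 =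
        (n - (A2 ∪ A3).card + 1) / 2 + (n - (A1 ∪ A3).card + 1) / 2 +
          (n - (A1 ∪ A2).card + 1) / 2) := by
  intro _ _ _ _ hP2P1 _ _ _ _ hsum
  set A1 : Finset (Fin n) := Finset.univ.filter fun i => (i : ℕ) < r
  have hU : A1 ∪ A2 ∪ A3 = Finset.univ := by
    rwa [varIdeal_sup_varIdeal, varIdeal_sup_varIdeal, varIdeal_eq_maxIdeal_iff] at hsum
  obtain ⟨i, -, hiA1⟩ := Finset.not_subset.1 (mt varIdeal_le_varIdeal_iff.2 hP2P1)
  have hr : A1.card = r := by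
    have hrn : r ≤ n := le_trans (by simpa [A1] using hiA1) i.is_le'
    rw [Fin.card_filter_val_lt, min_eq_right hrn]
  have hA := Finset.card_formula_A_of_union_eq_univ hU
  have hB := Finset.card_formula_A_of_union_eq_univ (B := A3) (C := A2) (by rwa [Finset.union_right_comm])
  have hC := Finset.card_formula_C_of_union_eq_univ hU
  rw [Finset.union_comm A3 A2] at hB
  rw [Fintype.card_fin] at hA hB hC
  rw [hr] at hC
  exact ⟨hA, hB, hC⟩
end

section
/- Let P_1, P_2, P_3 be monomial primes of S = K[x_1,...,x_n], pairwise incomparable, with P_1 + P_2 + P_3 = (x_1,...,x_n) and P_i ⊄ P_j + P_k for all distinct i, j, k. Then depth_S(S / ((P_1 + P_3) ∩ (P_2 + P_3))) = 1, and moreover (P_1 + P_3) ∩ (P_2 + P_3) = P_3 + (P_1 ∩ P_2). -/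
open MvPolynomial

/-!
The primes `P₁ + P₃` and `P₂ + P₃` are incomparable (because `Pᵢ ⊄ Pⱼ + Pₖ`) and their sum is
the maximal ideal. For incomparable primes `P, Q` with `P + Q ≠ R`, an element is regular on
`R/(P ∩ Q)` exactly when it avoids `P ∪ Q`, and `f + g` with `f ∈ P \ Q`, `g ∈ Q \ P` is such an
element, so the depth is at least one. Writing any regular element as `r = p + q` with `p ∈ P`,
`q ∈ Q`, the class of `q` in `R/(P ∩ Q + (r))` is nonzero but killed by `P + Q`, so no second
element of `P + Q` is regular and the depth is one.

The modular law comes from the substitution `xᵢ ↦ 0` for the variables of `P₃`: it changes `f`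
only by an element of `P₃`, and it maps `Pᵢ + P₃` into `Pᵢ`.
-/

open scoped Pointwise

namespace Ideal

variable {R : Type*} [CommRing R]

lemma Quotient.mk_mem_smul_top_iff {I : Ideal R} {r x : R} :
    Quotient.mk I x ∈ r • (⊤ : Submodule R (R ⧸ I)) ↔ x ∈ I ⊔ span {r} := by
  simp only [Submodule.mem_smul_pointwise_iff_exists, Submodule.mem_top, true_and,
    Submodule.mem_sup, mem_span_singleton']
  constructor
  · rintro ⟨y, hy⟩
    obtain ⟨t, rfl⟩ := Quotient.mk_surjective y
    refine ⟨x - t * r, ?_, t * r, ⟨t, rfl⟩, by ring⟩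
    rw [← Quotient.eq, ← hy, Algebra.smul_def, Quotient.algebraMap_eq, ← map_mul, mul_comm]
  · rintro ⟨i, hi, _, ⟨t, rfl⟩, rfl⟩
    refine ⟨Quotient.mk I t, ?_⟩
    rw [Algebra.smul_def, Quotient.algebraMap_eq, ← map_mul, Quotient.eq]
    simpa [mul_comm] using neg_mem hi

variable {P Q : Ideal R}

lemma isSMulRegular_quotient_inf (hP : P.IsPrime) (hQ : Q.IsPrime) {r : R} (hrP : r ∉ P)
    (hrQ : r ∉ Q) : IsSMulRegular (R ⧸ (P ⊓ Q)) r := by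
  rw [isSMulRegular_quotient_iff_mem_of_smul_mem]
  rintro x ⟨hxP, hxQ⟩
  exact ⟨(hP.mem_or_mem hxP).resolve_left hrP, (hQ.mem_or_mem hxQ).resolve_left hrQ⟩

lemma notMem_of_isSMulRegular_quotient_inf {r : R} (hr : IsSMulRegular (R ⧸ (P ⊓ Q)) r)
    (hQP : ¬Q ≤ P) : r ∉ P := by
  intro hrP
  obtain ⟨f, hfQ, hfP⟩ := SetLike.not_le_iff_exists.mp hQP
  exact hfP (mem_of_isSMulRegular_quotient_of_smul_mem hr
    ⟨P.mul_mem_right f hrP, Q.mul_mem_left r hfQ⟩).1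

lemma notMem_inf_sup_span_add (hP : P.IsPrime) (hQ : Q.IsPrime) (hPQ : P ⊔ Q ≠ ⊤)
    {p q : R} (hp : p ∈ P) (hq : q ∈ Q) (hpqP : p + q ∉ P) (hpqQ : p + q ∉ Q) :
    q ∉ P ⊓ Q ⊔ span {p + q} := by
  rw [Submodule.mem_sup]
  rintro ⟨i, ⟨hiP, hiQ⟩, _, hj, hq_eq⟩
  obtain ⟨t, rfl⟩ := mem_span_singleton'.mp hj
  have htQ : t ∈ Q := by
    refine (hQ.mem_or_mem (?_ : (p + q) * t ∈ Q)).resolve_left hpqQ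
    rw [show (p + q) * t = q - i by linear_combination hq_eq]
    exact Q.sub_mem hq hiQ
  have htP : 1 - t ∈ P := by
    refine (hP.mem_or_mem (?_ : (p + q) * (1 - t) ∈ P)).resolve_left hpqP
    rw [show (p + q) * (1 - t) = p + i by linear_combination -hq_eq]
    exact P.add_mem hp hiP
  exact hPQ ((eq_top_iff_one _).mpr (by simpa using Submodule.add_mem_sup htP htQ))


lemma not_isSMulRegular_quotSMulTop_quotient_inf (hP : P.IsPrime) (hQ : Q.IsPrime)
    (hPQ : P ⊔ Q ≠ ⊤) {r s : R} (hr : r ∈ P ⊔ Q) (hrP : r ∉ P) (hrQ : r ∉ Q) (hs : s ∈ P ⊔ Q) :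
    ¬IsSMulRegular (QuotSMulTop r (R ⧸ (P ⊓ Q))) s := by
  obtain ⟨p, hp, q, hq, rfl⟩ := Submodule.mem_sup.mp hr
  obtain ⟨a, ha, b, hb, rfl⟩ := Submodule.mem_sup.mp hs
  rw [isSMulRegular_quotient_iff_mem_of_smul_mem, not_forall]
  refine ⟨Quotient.mk _ q, ?_⟩
  rw [Algebra.smul_def, Quotient.algebraMap_eq, ← map_mul, Quotient.mk_mem_smul_top_iff,
    Quotient.mk_mem_smul_top_iff, Classical.not_imp]
  -- `q` represents a nonzero class modulo `r` that is killed by `s`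
  refine ⟨?_, notMem_inf_sup_span_add hP hQ hPQ hp hq hrP hrQ⟩
  rw [show (a + b) * q = (a * q - b * p) + b * (p + q) by ring]
  exact Submodule.add_mem_sup
    (sub_mem ⟨P.mul_mem_right q ha, Q.mul_mem_left a hq⟩
      ⟨P.mul_mem_left b hp, Q.mul_mem_right p hb⟩)
    (mem_span_singleton'.mpr ⟨b, rfl⟩)

lemma nontrivial_quotSMulTop_quotient {I : Ideal R} {r : R} (h : I ⊔ span {r} ≠ ⊤) :
    Nontrivial (QuotSMulTop r (R ⧸ I)) := by
  refine Submodule.Quotient.nontrivial_iff.mpr fun htop => h ((eq_top_iff_one _).mpr ?_)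
  rw [← Quotient.mk_mem_smul_top_iff, htop]
  trivial

end Ideal

section Depth

variable {R : Type*} [CommRing R] {M : Type*} [AddCommGroup M] [Module R M]

open RingTheory.Sequence in
lemma moduleDepth_eq_one_of_isSMulRegular {I : Ideal R} {r : R} (hrI : r ∈ I)
    (hr : IsSMulRegular M r) [Nontrivial (QuotSMulTop r M)]
    (h : ∀ r ∈ I, ∀ s ∈ I, IsSMulRegular M r → ¬IsSMulRegular (QuotSMulTop r M) s) :
    moduleDepth R I M = 1 := by
  have hseq : IsRegular M [r] := (isRegular_cons_iff M r []).mpr ⟨hr, .nil R _⟩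
  have hmem : 1 ∈ {k | ∃ rs : List R, rs.length = k ∧ (∀ r ∈ rs, r ∈ I) ∧ IsRegular M rs} :=
    ⟨[r], rfl, by simpa using hrI, hseq⟩
  refine le_antisymm (csSup_le ⟨1, hmem⟩ ?_) (le_csSup ⟨1, ?_⟩ hmem)
  all_goals
    rintro k ⟨rs, rfl, hI, hreg⟩
    match rs, hI, hreg with
    | [], _, _ => exact zero_le_one
    | [_], _, _ => exact le_rfl
    | a :: b :: _, hI, hreg =>
      simp only [isRegular_cons_iff] at hreg
      exact absurd hreg.2.1 (h a (hI a (by simp)) b (hI b (by simp)) hreg.1)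

theorem moduleDepth_quotient_inf_eq_one {P Q : Ideal R} (hP : P.IsPrime) (hQ : Q.IsPrime)
    (hPQ : ¬P ≤ Q) (hQP : ¬Q ≤ P) (hne : P ⊔ Q ≠ ⊤) :
    moduleDepth R (P ⊔ Q) (R ⧸ (P ⊓ Q)) = 1 := by
  obtain ⟨f, hfP, hfQ⟩ := SetLike.not_le_iff_exists.mp hPQ
  obtain ⟨g, hgQ, hgP⟩ := SetLike.not_le_iff_exists.mp hQP
  have hP' : f + g ∉ P := fun h => hgP (by simpa using P.sub_mem h hfP)
  have hQ' : f + g ∉ Q := fun h => hfQ (by simpa using Q.sub_mem h hgQ)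
  have hmem : f + g ∈ P ⊔ Q := Submodule.add_mem_sup hfP hgQ
  have hle : P ⊓ Q ⊔ Ideal.span {f + g} ≤ P ⊔ Q :=
    sup_le (inf_le_left.trans le_sup_left) ((Ideal.span_singleton_le_iff_mem _).mpr hmem)
  have := Ideal.nontrivial_quotSMulTop_quotient (ne_top_of_le_ne_top hne hle)
  refine moduleDepth_eq_one_of_isSMulRegular hmem
    (Ideal.isSMulRegular_quotient_inf hP hQ hP' hQ') ?_
  intro r hr s hs hreg
  exact Ideal.not_isSMulRegular_quotSMulTop_quotient_inf hP hQ hne hr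
    (Ideal.notMem_of_isSMulRegular_quotient_inf hreg hQP)
    (Ideal.notMem_of_isSMulRegular_quotient_inf (by rwa [inf_comm]) hPQ) hs

end Depth

section VarIdeal

variable {K : Type*} [Field K] {n : ℕ}

noncomputable def killVars (K : Type*) [Field K] (A : Finset (Fin n)) :
    MvPolynomial (Fin n) K →ₐ[K] MvPolynomial (Fin n) K :=
  aeval fun i => if i ∈ A then 0 else X i

lemma X_mem_varIdeal {A : Finset (Fin n)} {i : Fin n} (hi : i ∈ A) :
    (X i : MvPolynomial (Fin n) K) ∈ varIdeal K A :=
  Ideal.subset_span ⟨i, hi, rfl⟩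

lemma sub_killVars_mem_varIdeal (A : Finset (Fin n)) (f : MvPolynomial (Fin n) K) :
    f - killVars K A f ∈ varIdeal K A := by
  have hcomp : (Ideal.Quotient.mkₐ K (varIdeal K A)).comp (killVars K A) =
      Ideal.Quotient.mkₐ K (varIdeal K A) := by
    refine algHom_ext fun i => ?_
    by_cases hi : i ∈ A
    · simpa [killVars, hi] using
        (Ideal.Quotient.eq_zero_iff_mem.mpr (X_mem_varIdeal (K := K) hi)).symm
    · simp [killVars, hi]
  exact Ideal.Quotient.eq.mp (AlgHom.congr_fun hcomp f).symm

lemma ker_killVars (A : Finset (Fin n)) : RingHom.ker (killVars K A) = varIdeal K A := by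
  refine le_antisymm (fun f hf => ?_) ?_
  · simpa [RingHom.mem_ker.mp hf] using sub_killVars_mem_varIdeal A f
  · rw [varIdeal, Ideal.span_le]
    rintro - ⟨i, hi, rfl⟩
    simp [killVars, Finset.mem_coe.mp hi]

lemma varIdeal_isPrime (A : Finset (Fin n)) : (varIdeal K A).IsPrime :=
  ker_killVars (K := K) A ▸ RingHom.ker_isPrime _

lemma varIdeal_mono {A B : Finset (Fin n)} (h : A ⊆ B) : varIdeal K A ≤ varIdeal K B :=
  Ideal.span_mono (Set.image_mono (Finset.coe_subset.mpr h))

lemma varIdeal_sup (A B : Finset (Fin n)) :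
    varIdeal K A ⊔ varIdeal K B = varIdeal K (A ∪ B) := by
  rw [varIdeal, varIdeal, varIdeal, ← Ideal.span_union, ← Set.image_union, Finset.coe_union]

lemma killVars_mem_varIdeal_sdiff {A B : Finset (Fin n)} {f : MvPolynomial (Fin n) K}
    (hf : f ∈ varIdeal K B) : killVars K A f ∈ varIdeal K (B \ A) := by
  suffices varIdeal K B ≤ (varIdeal K (B \ A)).comap (killVars K A) from this hf
  rw [varIdeal, Ideal.span_le]
  rintro - ⟨i, hi, rfl⟩
  by_cases hiA : i ∈ A
  · simp [killVars, hiA]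
  · simpa [killVars, hiA] using X_mem_varIdeal (Finset.mem_sdiff.mpr ⟨hi, hiA⟩)

lemma varIdeal_union_inf_union (A B C : Finset (Fin n)) :
    varIdeal K (A ∪ C) ⊓ varIdeal K (B ∪ C) = varIdeal K C ⊔ (varIdeal K A ⊓ varIdeal K B) := by
  refine le_antisymm ?_ ?_
  · rintro f ⟨hfA, hfB⟩
    have hA := killVars_mem_varIdeal_sdiff (A := C) hfA
    have hB := killVars_mem_varIdeal_sdiff (A := C) hfB
    rw [Finset.union_sdiff_right] at hA hB
    refine Submodule.mem_sup.mpr ⟨f - killVars K C f, sub_killVars_mem_varIdeal C f,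
      killVars K C f, ⟨?_, ?_⟩, sub_add_cancel _ _⟩
    · exact varIdeal_mono Finset.sdiff_subset hA
    · exact varIdeal_mono Finset.sdiff_subset hB
  · rw [← varIdeal_sup, ← varIdeal_sup]
    exact sup_le (le_inf le_sup_right le_sup_right) (inf_le_inf le_sup_left le_sup_left)

end VarIdeal

/-- in the generic case, `depth S/((P₁+P₃) ∩ (P₂+P₃)) = 1`, and
the modular-law identity `(P₁+P₃) ∩ (P₂+P₃) = P₃ + (P₁ ∩ P₂)` holds. -/
theorem depth_one_and_modular_identity {K : Type*} [Field K] (n : ℕ)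
    (A1 A2 A3 : Finset (Fin n)) :
    letI P1 : Ideal (MvPolynomial (Fin n) K) := varIdeal K A1
    letI P2 : Ideal (MvPolynomial (Fin n) K) := varIdeal K A2
    letI P3 : Ideal (MvPolynomial (Fin n) K) := varIdeal K A3
    P1 ≠ ⊥ → P2 ≠ ⊥ → P3 ≠ ⊥ →
    ¬P1 ≤ P2 → ¬P2 ≤ P1 → ¬P1 ≤ P3 → ¬P3 ≤ P1 → ¬P2 ≤ P3 → ¬P3 ≤ P2 →
    P1 ⊔ P2 ⊔ P3 = maxIdeal n K →
    ¬P1 ≤ P2 ⊔ P3 → ¬P2 ≤ P1 ⊔ P3 → ¬P3 ≤ P1 ⊔ P2 →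
    moduleDepth (MvPolynomial (Fin n) K) (maxIdeal n K)
        (MvPolynomial (Fin n) K ⧸ ((P1 ⊔ P3) ⊓ (P2 ⊔ P3))) = 1 ∧
      (P1 ⊔ P3) ⊓ (P2 ⊔ P3) = P3 ⊔ (P1 ⊓ P2) := by
  intro _ _ _ _ _ _ _ _ _ hsum hP1 hP2 _
  have hprime : ∀ A B : Finset (Fin n), (varIdeal K A ⊔ varIdeal K B).IsPrime :=
    fun A B => varIdeal_sup (K := K) A B ▸ varIdeal_isPrime _
  have hmax : (varIdeal K A1 ⊔ varIdeal K A3) ⊔ (varIdeal K A2 ⊔ varIdeal K A3) =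
      maxIdeal n K := by
    rw [sup_sup_sup_comm, sup_idem, hsum]
  refine ⟨?_, by rw [varIdeal_sup, varIdeal_sup, varIdeal_union_inf_union]⟩
  rw [← hmax]
  exact moduleDepth_quotient_inf_eq_one (hprime A1 A3) (hprime A2 A3)
    (fun h => hP1 (le_sup_left.trans h)) (fun h => hP2 (le_sup_left.trans h))
    (hmax ▸ (varIdeal_isPrime _).ne_top)
end
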